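/- Let Ω ⊂ ℝ^N (N ≥ 2) be a bounded domain such that every point of Γ is regular for the Dirichlet problem, and let u ∈ C⁰(Ω̄) ∩ C²(Ω) be the solution of Δu = N in Ω with u = 0 on Γ. Then −u(x) ≥ (1/2)·δ_Γ(x)² for every x ∈ Ω̄. -/

import Mathlib

open MeasureTheory Metric Set Bornology
open scoped RealInnerProductSpace NNReal ENNReal

noncomputable section

/-- The Laplacian of `u` at `x`, computed in the standard orthonormal basis. -/
def lap {N : ℕ} (u : EuclideanSpace ℝ (Fin N) → ℝ) (x : EuclideanSpace ℝ (Fin N)) : ℝ :=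
  ∑ i : Fin N,
    fderiv ℝ (fun y => fderiv ℝ u y (EuclideanSpace.single i 1)) x (EuclideanSpace.single i 1)

/-- The squared Frobenius norm `|∇²u|²` of the Hessian of `u` at `x`. -/
def hessSq {N : ℕ} (u : EuclideanSpace ℝ (Fin N) → ℝ) (x : EuclideanSpace ℝ (Fin N)) : ℝ :=
  ∑ i : Fin N, ∑ j : Fin N,
    (fderiv ℝ (fun y => fderiv ℝ u y (EuclideanSpace.single j 1)) x
      (EuclideanSpace.single i 1)) ^ 2

/-- The divergence of a vector field `w`. -/
def vdiv {N : ℕ} (w : EuclideanSpace ℝ (Fin N) → EuclideanSpace ℝ (Fin N))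
    (x : EuclideanSpace ℝ (Fin N)) : ℝ :=
  ∑ i : Fin N, fderiv ℝ (fun y => w y i) x (EuclideanSpace.single i 1)

/-- The surface measure: the `(N-1)`-dimensional Hausdorff measure. -/
def surf (N : ℕ) : Measure (EuclideanSpace ℝ (Fin N)) := μH[(N : ℝ) - 1]

/-- `u` solves the torsion problem `Δu = N` in `Ω`, `u = 0` on `Γ = ∂Ω`. -/
def torsion {N : ℕ} (Ω : Set (EuclideanSpace ℝ (Fin N))) (u : EuclideanSpace ℝ (Fin N) → ℝ) :
    Prop :=
  ContDiffOn ℝ 2 u Ω ∧ (∀ x ∈ Ω, lap u x = (N : ℝ)) ∧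
    ContinuousOn u (closure Ω) ∧ ∀ x ∈ frontier Ω, u x = 0

/-- The quadratic polynomial `q(x) = (|x-z|² - a)/2`. -/
def qf {N : ℕ} (z : EuclideanSpace ℝ (Fin N)) (a : ℝ) (x : EuclideanSpace ℝ (Fin N)) : ℝ :=
  (‖x - z‖ ^ 2 - a) / 2

/-- The reference constant `R = N|Ω|/|Γ|`. -/
def RΩ {N : ℕ} (Ω : Set (EuclideanSpace ℝ (Fin N))) : ℝ :=
  N * (volume Ω).toReal / ((surf N) (frontier Ω)).toReal

/-- The reference constant `H₀ = |Γ|/(N|Ω|)`. -/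
def H0 {N : ℕ} (Ω : Set (EuclideanSpace ℝ (Fin N))) : ℝ :=
  ((surf N) (frontier Ω)).toReal / (N * (volume Ω).toReal)

/-- `Ω` has boundary of class `C²`, with outward unit normal field `ν`: near every boundary
point, `Ω` is the sublevel set of a `C²` defining function with nonvanishing gradient, and `ν`
is the normalized gradient of the defining function. -/
def C2Boundary {N : ℕ} (Ω : Set (EuclideanSpace ℝ (Fin N)))
    (ν : EuclideanSpace ℝ (Fin N) → EuclideanSpace ℝ (Fin N)) : Prop :=
  ∀ x ∈ frontier Ω, ∃ (U : Set (EuclideanSpace ℝ (Fin N))) (f : EuclideanSpace ℝ (Fin N) → ℝ),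
    IsOpen U ∧ x ∈ U ∧ ContDiffOn ℝ 2 f U ∧
    (∀ y ∈ U, (y ∈ Ω ↔ f y < 0)) ∧
    ∀ y ∈ U ∩ frontier Ω, gradient f y ≠ 0 ∧ ν y = ‖gradient f y‖⁻¹ • gradient f y

/-- `Ω` has boundary of class `C^{1,α}`, with outward unit normal field `ν`. -/
def C1αBoundary {N : ℕ} (Ω : Set (EuclideanSpace ℝ (Fin N))) (α : ℝ)
    (ν : EuclideanSpace ℝ (Fin N) → EuclideanSpace ℝ (Fin N)) : Prop :=
  ∀ x ∈ frontier Ω, ∃ (U : Set (EuclideanSpace ℝ (Fin N))) (f : EuclideanSpace ℝ (Fin N) → ℝ)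
    (C : ℝ≥0),
    IsOpen U ∧ x ∈ U ∧ ContDiffOn ℝ 1 f U ∧
    HolderOnWith C α.toNNReal (fun y => gradient f y) U ∧
    (∀ y ∈ U, (y ∈ Ω ↔ f y < 0)) ∧
    ∀ y ∈ U ∩ frontier Ω, gradient f y ≠ 0 ∧ ν y = ‖gradient f y‖⁻¹ • gradient f y

/-- `Ω` has boundary of class `C^{0,α}`: near every boundary point, after choosing a direction
`e`, `Ω` is the subgraph of an `α`-Hölder continuous function on the hyperplane orthogonal
to `e`. -/
def HolderBoundary {N : ℕ} (Ω : Set (EuclideanSpace ℝ (Fin N))) (α : ℝ) : Prop :=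
  ∀ x ∈ frontier Ω, ∃ (e : EuclideanSpace ℝ (Fin N)) (r : ℝ)
    (φ : EuclideanSpace ℝ (Fin N) → ℝ) (C : ℝ≥0),
    ‖e‖ = 1 ∧ 0 < r ∧ HolderOnWith C α.toNNReal φ univ ∧
    ∀ y ∈ ball x r, (y ∈ Ω ↔ (inner ℝ y e : ℝ) < φ (y - (inner ℝ y e : ℝ) • e))

/-- `H` is the mean curvature of `∂Ω` (with respect to the inward normal, so that `H = 1/ρ`
for a ball of radius `ρ`): it is given by `div(∇f/|∇f|)/(N-1)` for a local `C²` defining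
function `f` of `Ω`. -/
def meanCurv {N : ℕ} (Ω : Set (EuclideanSpace ℝ (Fin N)))
    (H : EuclideanSpace ℝ (Fin N) → ℝ) : Prop :=
  ∀ x ∈ frontier Ω, ∃ (U : Set (EuclideanSpace ℝ (Fin N))) (f : EuclideanSpace ℝ (Fin N) → ℝ),
    IsOpen U ∧ x ∈ U ∧ ContDiffOn ℝ 2 f U ∧
    (∀ y ∈ U, (y ∈ Ω ↔ f y < 0)) ∧
    (∀ y ∈ U ∩ frontier Ω, gradient f y ≠ 0) ∧
    H x = ((N : ℝ) - 1)⁻¹ * vdiv (fun y => ‖gradient f y‖⁻¹ • gradient f y) x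

/-- `Ω` satisfies the uniform interior sphere condition with radius `r`. -/
def IntSphere {N : ℕ} (Ω : Set (EuclideanSpace ℝ (Fin N))) (r : ℝ) : Prop :=
  0 < r ∧ ∀ p ∈ frontier Ω, ∃ c, ball c r ⊆ Ω ∧ closedBall c r ∩ frontier Ω = {p}

/-- `Ω` satisfies the uniform exterior sphere condition with radius `r`. -/
def ExtSphere {N : ℕ} (Ω : Set (EuclideanSpace ℝ (Fin N))) (r : ℝ) : Prop :=
  0 < r ∧ ∀ p ∈ frontier Ω, ∃ c, ball c r ⊆ (closure Ω)ᶜ ∧ closedBall c r ∩ frontier Ω = {p}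

/-- `v` is harmonic in `Ω`. -/
def HarmOn {N : ℕ} (Ω : Set (EuclideanSpace ℝ (Fin N))) (v : EuclideanSpace ℝ (Fin N) → ℝ) :
    Prop :=
  ContDiffOn ℝ 2 v Ω ∧ ∀ x ∈ Ω, lap v x = 0

/-- The best constant `μ_α(Ω)` (with base point `x₀`) in the Hardy–Poincaré inequality
`∫_Ω v² ≤ μ_α(Ω)⁻¹ ∫_Ω |∇v|² δ_Γ^{2α}` over `W^{1,2}` functions harmonic in `Ω`
vanishing at `x₀`. -/
def muHP {N : ℕ} (Ω : Set (EuclideanSpace ℝ (Fin N))) (x₀ : EuclideanSpace ℝ (Fin N))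
    (α : ℝ) : ℝ :=
  sInf { r | ∃ v : EuclideanSpace ℝ (Fin N) → ℝ, HarmOn Ω v ∧ v x₀ = 0 ∧
    IntegrableOn (fun x => (v x) ^ 2) Ω ∧
    IntegrableOn (fun x => ‖gradient v x‖ ^ 2 * infDist x (frontier Ω) ^ (2 * α)) Ω ∧
    (∫ x in Ω, (v x) ^ 2) = 1 ∧
    r = ∫ x in Ω, ‖gradient v x‖ ^ 2 * infDist x (frontier Ω) ^ (2 * α) }

/-- The best constant `μ̄(Ω)` in the Poincaré inequality `∫_Ω v² ≤ μ̄(Ω)⁻¹ ∫_Ω |∇v|²` over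
`W^{1,2}` functions harmonic in `Ω` with zero mean on `Ω`. -/
def muBar {N : ℕ} (Ω : Set (EuclideanSpace ℝ (Fin N))) : ℝ :=
  sInf { r | ∃ v : EuclideanSpace ℝ (Fin N) → ℝ, HarmOn Ω v ∧ (∫ x in Ω, v x) = 0 ∧
    IntegrableOn (fun x => (v x) ^ 2) Ω ∧
    IntegrableOn (fun x => ‖gradient v x‖ ^ 2) Ω ∧
    (∫ x in Ω, (v x) ^ 2) = 1 ∧
    r = ∫ x in Ω, ‖gradient v x‖ ^ 2 }

/-- `M = max_{Ω̄} |∇u|`. -/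
def Mgrad {N : ℕ} (Ω : Set (EuclideanSpace ℝ (Fin N))) (u : EuclideanSpace ℝ (Fin N) → ℝ) :
    ℝ :=
  ⨆ x ∈ closure Ω, ‖gradient u x‖

/-- `ρ_i = min_{x ∈ Γ} |x - z|`. -/
def rhoi {N : ℕ} (Ω : Set (EuclideanSpace ℝ (Fin N))) (z : EuclideanSpace ℝ (Fin N)) : ℝ :=
  infDist z (frontier Ω)

/-- `ρ_e = max_{x ∈ Γ} |x - z|`. -/
def rhoe {N : ℕ} (Ω : Set (EuclideanSpace ℝ (Fin N))) (z : EuclideanSpace ℝ (Fin N)) : ℝ :=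
  ⨆ x ∈ frontier Ω, dist x z

/-- The (Fraenkel-type) asymmetry `A(Ω) = inf_x |Ω Δ B_R(x)| / |B_R(x)|`. -/
def asym {N : ℕ} (Ω : Set (EuclideanSpace ℝ (Fin N))) : ℝ :=
  sInf { m | ∃ x : EuclideanSpace ℝ (Fin N),
    m = (volume (symmDiff Ω (ball x (RΩ Ω)))).toReal / (volume (ball x (RΩ Ω))).toReal }

/-! Since `Δ(|w - x|²) = 2N`, the function `u + a (δ² - |· - x|²)` with `δ = δ_Γ(x)` and
`0 ≤ a < 1/2` is strictly subharmonic in `Ω` and nonpositive on `Γ`, where `|w - x| ≥ δ`.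
By the weak maximum principle it is nonpositive at `x`, i.e. `-u(x) ≥ a δ²`; let `a → 1/2`.
The maximum principle itself holds because at an interior maximum every second directional
derivative is nonpositive. -/

open Filter Topology

theorem IsLocalMax.deriv_deriv_nonpos {g : ℝ → ℝ} {a : ℝ} (h : IsLocalMax g a)
    (hc : ContinuousAt g a) : deriv (deriv g) a ≤ 0 := by
  by_contra! hpos
  -- the second derivative test would make `a` a local minimum too, so `g` is locally constant
  have hmin : IsLocalMin g a := isLocalMin_of_deriv_deriv_pos hpos h.deriv_eq_zero hc
  have hconst : g =ᶠ[𝓝 a] fun _ => g a :=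
    (hmin.and h).mono fun y hy => le_antisymm hy.2 hy.1
  have hderiv : deriv g =ᶠ[𝓝 a] fun _ => 0 :=
    hconst.eventually_nhds.mono fun y (hy : g =ᶠ[𝓝 y] _) => by rw [hy.deriv_eq, deriv_const]
  rw [hderiv.deriv_eq, deriv_const] at hpos
  exact hpos.false

theorem ContDiffAt.differentiableAt_fderiv_apply {E F : Type*} [NormedAddCommGroup E]
    [NormedSpace ℝ E] [NormedAddCommGroup F] [NormedSpace ℝ F] {f : E → F} {x : E}
    (hf : ContDiffAt ℝ 2 f x) (e : E) : DifferentiableAt ℝ (fun y => fderiv ℝ f y e) x :=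
  ((hf.fderiv_right (m := 1) (by norm_num)).clm_apply contDiffAt_const).differentiableAt
    one_ne_zero

theorem ContDiffAt.eventually_differentiableAt {E F : Type*} [NormedAddCommGroup E]
    [NormedSpace ℝ E] [NormedAddCommGroup F] [NormedSpace ℝ F] {f : E → F} {x : E}
    (hf : ContDiffAt ℝ 2 f x) : ∀ᶠ y in 𝓝 x, DifferentiableAt ℝ f y :=
  (hf.eventually (by simp)).mono fun _ hy => hy.differentiableAt (by norm_num)

theorem IsLocalMax.fderiv_fderiv_apply_nonpos {E : Type*} [NormedAddCommGroup E]
    [NormedSpace ℝ E] {v : E → ℝ} {x e : E} (h : IsLocalMax v x)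
    (hv : ∀ᶠ y in 𝓝 x, DifferentiableAt ℝ v y)
    (hv' : DifferentiableAt ℝ (fun y => fderiv ℝ v y e) x) :
    fderiv ℝ (fun y => fderiv ℝ v y e) x e ≤ 0 := by
  set γ : ℝ → E := fun t => x + t • e
  have hγ : ∀ t, HasDerivAt γ e t := fun t => by
    simpa [γ] using ((hasDerivAt_id t).smul_const e).const_add x
  have hγ0 : γ 0 = x := by simp [γ]
  have hγx : Tendsto γ (𝓝 0) (𝓝 x) := hγ0 ▸ (hγ 0).continuousAt.tendsto
  have hderiv : deriv (v ∘ γ) =ᶠ[𝓝 0] fun t => fderiv ℝ v (γ t) e :=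
    (hγx.eventually hv).mono fun t ht => (ht.hasFDerivAt.comp_hasDerivAt t (hγ t)).deriv
  have hmax : IsLocalMax (v ∘ γ) 0 := by
    simpa [IsLocalMax, IsMaxFilter, Function.comp, hγ0] using hγx.eventually h
  have hcont : ContinuousAt (v ∘ γ) 0 :=
    (hγ0 ▸ hv.self_of_nhds.continuousAt : ContinuousAt v (γ 0)).comp (hγ 0).continuousAt
  have hv'γ : HasFDerivAt (fun y => fderiv ℝ v y e) (fderiv ℝ (fun y => fderiv ℝ v y e) x)
      (γ 0) := hγ0 ▸ hv'.hasFDerivAt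
  have hcomp : HasDerivAt (fun t => fderiv ℝ v (γ t) e)
      (fderiv ℝ (fun y => fderiv ℝ v y e) x e) 0 := hv'γ.comp_hasDerivAt 0 (hγ 0)
  have hsecond := hmax.deriv_deriv_nonpos hcont
  rwa [hderiv.deriv_eq, hcomp.deriv] at hsecond

section Laplacian

variable {N : ℕ}

theorem lap_nonpos_of_isLocalMax {v : EuclideanSpace ℝ (Fin N) → ℝ}
    {x : EuclideanSpace ℝ (Fin N)} (hv : ContDiffAt ℝ 2 v x) (hmax : IsLocalMax v x) :
    lap v x ≤ 0 :=
  Finset.sum_nonpos fun _ _ => hmax.fderiv_fderiv_apply_nonpos hv.eventually_differentiableAt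
    (hv.differentiableAt_fderiv_apply _)

theorem le_of_lap_pos_of_frontier_le {B : Set (EuclideanSpace ℝ (Fin N))}
    {v : EuclideanSpace ℝ (Fin N) → ℝ} {M : ℝ} (hBo : IsOpen B) (hBb : IsBounded B)
    (hv : ContDiffOn ℝ 2 v B) (hvc : ContinuousOn v (closure B))
    (hlap : ∀ y ∈ B, 0 < lap v y) (hfr : ∀ y ∈ frontier B, v y ≤ M) :
    ∀ x ∈ closure B, v x ≤ M := by
  intro x hx
  obtain ⟨x₀, hx₀, hmax⟩ := hBb.isCompact_closure.exists_isMaxOn ⟨x, hx⟩ hvc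
  refine (hmax hx).trans (hfr x₀ ⟨hx₀, fun hx₀B => ?_⟩)
  rw [hBo.interior_eq] at hx₀B
  have hloc : IsLocalMax v x₀ :=
    hmax.isLocalMax (mem_of_superset (hBo.mem_nhds hx₀B) subset_closure)
  exact (hlap x₀ hx₀B).not_ge
    (lap_nonpos_of_isLocalMax ((hv x₀ hx₀B).contDiffAt (hBo.mem_nhds hx₀B)) hloc)

theorem lap_add {f g : EuclideanSpace ℝ (Fin N) → ℝ} {x : EuclideanSpace ℝ (Fin N)}
    (hf : ContDiffAt ℝ 2 f x) (hg : ContDiffAt ℝ 2 g x) :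
    lap (fun y => f y + g y) x = lap f x + lap g x := by
  rw [lap, lap, lap, ← Finset.sum_add_distrib]
  refine Finset.sum_congr rfl fun i _ => ?_
  set e := EuclideanSpace.single i (1 : ℝ)
  have hfirst : (fun y => fderiv ℝ (fun y => f y + g y) y e)
      =ᶠ[𝓝 x] fun y => fderiv ℝ f y e + fderiv ℝ g y e :=
    (hf.eventually_differentiableAt.and hg.eventually_differentiableAt).mono fun y hy => by
      simp only [fderiv_fun_add hy.1 hy.2]
      rfl
  rw [hfirst.fderiv_eq, fderiv_fun_add (hf.differentiableAt_fderiv_apply e)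
    (hg.differentiableAt_fderiv_apply e)]
  rfl

theorem fderiv_paraboloid_apply (z x e : EuclideanSpace ℝ (Fin N)) (c d : ℝ) :
    fderiv ℝ (fun w => c * ‖w - z‖ ^ 2 + d) x e = 2 * c * ⟪x - z, e⟫ := by
  have hsub : HasFDerivAt (fun y => y - z) (.id ℝ (EuclideanSpace ℝ (Fin N))) x :=
    (hasFDerivAt_id x).sub_const z
  rw [((hsub.norm_sq.const_mul c).add_const d).fderiv]
  simp only [ContinuousLinearMap.comp_id, smul_apply, coe_innerSL_apply,
    nsmul_eq_mul, Nat.cast_ofNat, smul_eq_mul, inner_sub_left]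
  ring

theorem lap_paraboloid (z x : EuclideanSpace ℝ (Fin N)) (c d : ℝ) :
    lap (fun w => c * ‖w - z‖ ^ 2 + d) x = 2 * c * N := by
  have hsub : HasFDerivAt (fun y => y - z) (.id ℝ (EuclideanSpace ℝ (Fin N))) x :=
    (hasFDerivAt_id x).sub_const z
  have hsecond : ∀ e : EuclideanSpace ℝ (Fin N),
      fderiv ℝ (fun y => fderiv ℝ (fun w => c * ‖w - z‖ ^ 2 + d) y e) x e = 2 * c * ⟪e, e⟫ := by
    intro e
    simp_rw [fderiv_paraboloid_apply]
    rw [((hsub.inner ℝ (hasFDerivAt_const e x)).const_mul (2 * c)).fderiv]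
    simp
  simp only [lap, hsecond, EuclideanSpace.inner_single_left, PiLp.single_eq_same, map_one,
    mul_one, Finset.sum_const, Finset.card_univ, Fintype.card_fin, nsmul_eq_mul]
  ring

end Laplacian

theorem mul_infDist_sq_le_neg_of_torsion {N : ℕ} (hN : 0 < N)
    {Ω : Set (EuclideanSpace ℝ (Fin N))} (hΩo : IsOpen Ω) (hΩb : IsBounded Ω)
    {u : EuclideanSpace ℝ (Fin N) → ℝ} (hu : torsion Ω u) {x : EuclideanSpace ℝ (Fin N)}
    (hx : x ∈ closure Ω) {a : ℝ} (ha₀ : 0 ≤ a) (ha : a < 1 / 2) :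
    a * infDist x (frontier Ω) ^ 2 ≤ -u x := by
  obtain ⟨hu₂, hlap, hcont, hfr⟩ := hu
  set δ := infDist x (frontier Ω)
  have hq : ContDiff ℝ 2 fun w : EuclideanSpace ℝ (Fin N) => -a * ‖w - x‖ ^ 2 + a * δ ^ 2 :=
    (((contDiff_norm_sq ℝ).comp (contDiff_id.sub contDiff_const)).const_smul (-a)).add
      contDiff_const
  have hv := le_of_lap_pos_of_frontier_le (v := fun w => u w + (-a * ‖w - x‖ ^ 2 + a * δ ^ 2))
    (M := 0) hΩo hΩb (hu₂.add hq.contDiffOn) (hcont.add hq.continuous.continuousOn)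
    (fun y hy => ?_) (fun y hy => ?_) x hx
  · simp only [sub_self, norm_zero] at hv
    linarith
  · rw [lap_add ((hu₂ y hy).contDiffAt (hΩo.mem_nhds hy)) hq.contDiffAt, hlap y hy,
      lap_paraboloid]
    have : (0 : ℝ) < N := Nat.cast_pos.mpr hN
    nlinarith
  · have hδ : δ ≤ ‖y - x‖ := by
      rw [← dist_eq_norm, dist_comm]
      exact infDist_le_dist_of_mem hy
    rw [hfr y hy]
    nlinarith [mul_le_mul_of_nonneg_left
      (pow_le_pow_left₀ infDist_nonneg hδ 2) ha₀]

theorem stmt5_general {N : ℕ} (hN : 2 ≤ N) (Ω : Set (EuclideanSpace ℝ (Fin N)))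
    (hΩo : IsOpen Ω) (hΩb : IsBounded Ω)
    (u : EuclideanSpace ℝ (Fin N) → ℝ) (hu : torsion Ω u) :
    ∀ x ∈ closure Ω, -(u x) ≥ (1 / 2) * infDist x (frontier Ω) ^ 2 := by
  intro x hx
  have hlim : Tendsto (fun a : ℝ => a * infDist x (frontier Ω) ^ 2) (𝓝[<] (1 / 2))
      (𝓝 ((1 / 2) * infDist x (frontier Ω) ^ 2)) :=
    (continuous_id.mul continuous_const).continuousAt.continuousWithinAt.tendsto
  refine le_of_tendsto hlim ?_
  filter_upwards [Ioo_mem_nhdsLT (show (0 : ℝ) < 1 / 2 by norm_num)] with a ha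
  exact mul_infDist_sq_le_neg_of_torsion (by omega) hΩo hΩb hu hx ha.1.le ha.2

theorem stmt5 {N : ℕ} (hN : 2 ≤ N) (Ω : Set (EuclideanSpace ℝ (Fin N)))
    (hΩo : IsOpen Ω) (hΩb : IsBounded Ω) (hΩc : IsConnected Ω)
    (u : EuclideanSpace ℝ (Fin N) → ℝ) (hu : torsion Ω u) :
    ∀ x ∈ closure Ω, -(u x) ≥ (1 / 2) * infDist x (frontier Ω) ^ 2 :=
  stmt5_general hN Ω hΩo hΩb u hu

end
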